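/- (Gram–Schmidt process) Let V be an innerproduct hyperspace over the real hyperfield and S = {w₁, ..., wₙ} a linearly independent subset. Define v₁ = w₁ and choose v_k ∈ w_k # (−∑_{j=1}^{k−1} (⟨w_k, v_j⟩/‖v_j‖²) * v_j) with v_k ≠ θ for 2 ≤ k ≤ n. Then S' = {v₁, ..., vₙ} is an orthogonal set of non-zero vectors with span(S') = span(S). -/

import Mathlib

/-- Hyperaddition of two sets: `A # B = ⋃_{a∈A, b∈B} a # b`. -/
def hSum {V : Type*} (hadd : V → V → Set V) (A B : Set V) : Set V :=
  ⋃ a ∈ A, ⋃ b ∈ B, hadd a b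

/-- A commutative hypergroup. -/
structure CommHypergroup (V : Type*) where
  hadd : V → V → Set V
  hadd_nonempty : ∀ a b, (hadd a b).Nonempty
  hadd_comm : ∀ a b, hadd a b = hadd b a
  hadd_assoc : ∀ a b c, hSum hadd {a} (hadd b c) = hSum hadd (hadd a b) {c}
  zero : V
  neg : V → V
  neg_spec : ∀ a, zero ∈ hadd a (neg a) ∧ zero ∈ hadd (neg a) a
  neg_unique : ∀ a b, zero ∈ hadd a b → zero ∈ hadd b a → b = neg a
  mem_shift : ∀ a b c, a ∈ hadd b c → b ∈ hadd a (neg c)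

/-- A hyperfield: hyperaddition, ordinary multiplication. -/
structure Hyperfield (F : Type*) extends CommHypergroup F where
  mul : F → F → F
  mul_assoc' : ∀ a b c, mul (mul a b) c = mul a (mul b c)
  mul_comm' : ∀ a b, mul a b = mul b a
  distrib : ∀ a b c, (mul a) '' (hadd b c) = hadd (mul a b) (mul a c)
  mul_zero' : ∀ a, mul a zero = zero
  one : F
  mul_one' : ∀ a, mul a one = a
  mul_inv' : ∀ a, a ≠ zero → ∃ b, mul a b = one

/-- A hypervector space over a hyperfield `K`. -/
structure HypVecSp (F : Type*) (K : Hyperfield F) (V : Type*) extends CommHypergroup V where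
  smul : F → V → Set V
  smul_nonempty : ∀ a α, (smul a α).Nonempty
  smul_hadd : ∀ a α β, (⋃ x ∈ hadd α β, smul a x) ⊆ hSum hadd (smul a α) (smul a β)
  hadd_smul : ∀ a b α, (⋃ c ∈ K.hadd a b, smul c α) ⊆ hSum hadd (smul a α) (smul b α)
  mul_smul' : ∀ a b α, smul (K.mul a b) α = ⋃ x ∈ smul b α, smul a x
  neg_smul' : ∀ a α, smul (K.neg a) α = smul a (neg α)
  one_smul' : ∀ α, α ∈ smul K.one α
  zero_smul' : ∀ α, zero ∈ smul K.zero α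
  zero_smul_zero : smul K.zero zero = {zero}

/-- The hyper-linear combination `λ₁*α₁ # λ₂*α₂ # ⋯ # λₙ*αₙ` of a list of
scalar/vector pairs (the empty combination is `{θ}`, which is neutral for `#`). -/
def combo {F V : Type*} (hadd : V → V → Set V) (smul : F → V → Set V) (z : V) :
    List (F × V) → Set V
  | [] => {z}
  | p :: l => hSum hadd (smul p.1 p.2) (combo hadd smul z l)

/-- The span of a set `A`: all vectors lying in some finite hyper-linear
combination of elements of `A`. -/
def hspan {F V : Type*} (hadd : V → V → Set V) (smul : F → V → Set V) (z : V)
    (A : Set V) : Set V :=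
  {x | ∃ l : List (F × V), l ≠ [] ∧ (∀ p ∈ l, p.2 ∈ A) ∧ x ∈ combo hadd smul z l}

/-- The real hyperfield: a hyperfield structure on `ℝ` whose multiplication,
zero and one are the usual ones. -/
structure RealHyperfield extends Hyperfield ℝ where
  zero_eq : zero = 0
  one_eq : one = 1
  mul_eq : ∀ a b, mul a b = a * b

/-- An innerproduct hyperspace over the real hyperfield. -/
structure InnerHyp (K : RealHyperfield) (V : Type*) extends
    HypVecSp ℝ K.toHyperfield V where
  inner : V → V → ℝ
  inner_pos : ∀ α, α ≠ zero → 0 < inner α α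
  inner_self_eq_zero : ∀ α, inner α α = 0 ↔ α = zero
  inner_symm : ∀ α β, inner α β = inner β α
  sup_hadd : ∀ α β γ, IsLUB ((fun x => inner x γ) '' hadd α β) (inner α γ + inner β γ)
  sup_smul : ∀ a α β, IsLUB ((fun x => inner x β) '' smul a α) (a * inner α β)

/-!
Once some vector is non-zero, the sup axioms force the hyperfield's `-1` to be the real `-1`.
From then on the innerproduct is exactly additive and homogeneous on *every* element of
`α # β` and `a * α` (not just in the sup), so `⟨x, γ⟩ = ∑ λᵢ ⟨αᵢ, γ⟩` for every `x` in a
hyper-linear combination. The classical computation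
`⟨vₖ, vⱼ⟩ = ⟨wₖ, vⱼ⟩ - (⟨wₖ, vⱼ⟩ / ‖vⱼ‖²) ⟨vⱼ, vⱼ⟩ = 0` then goes through by strong
induction on `k`. For the spans, `hspan` is closed under `#`, scalar multiples and negation,
and `vₖ ∈ wₖ # (-t)` can be reversed to `wₖ ∈ vₖ # t`.
-/
namespace CommHypergroup

variable {V : Type*} (G : CommHypergroup V)

theorem neg_neg (a : V) : G.neg (G.neg a) = a :=
  (G.neg_unique (G.neg a) a (G.neg_spec a).2 (G.neg_spec a).1).symm

theorem mem_hadd_zero (a : V) : a ∈ G.hadd a G.zero := by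
  have h := G.mem_shift G.zero a (G.neg a) (G.neg_spec a).1
  rwa [G.neg_neg, G.hadd_comm] at h

theorem neg_zero : G.neg G.zero = G.zero :=
  (G.neg_unique _ _ (G.mem_hadd_zero _) (G.mem_hadd_zero _)).symm

theorem exists_mem_hadd_of_mem_hadd_of_mem_hadd {x a b s u : V} (hx : x ∈ G.hadd a b)
    (ha : a ∈ G.hadd s u) : ∃ y ∈ G.hadd u b, x ∈ G.hadd s y := by
  have hmem : x ∈ hSum G.hadd (G.hadd s u) {b} := by
    simp only [hSum, Set.mem_iUnion]
    exact ⟨a, ha, b, rfl, hx⟩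
  rw [← G.hadd_assoc] at hmem
  simpa [hSum] using hmem

end CommHypergroup

namespace HypVecSp

section General

variable {F : Type*} {K : Hyperfield F} {V : Type*} (W : HypVecSp F K V)

theorem smul_zero (a : F) : W.smul a W.zero = {W.zero} := by
  have h := W.mul_smul' a K.zero W.zero
  rw [K.mul_zero', W.zero_smul_zero] at h
  simpa using h.symm

theorem neg_mem_smul_neg_one (α : V) : W.neg α ∈ W.smul (K.neg K.one) α := by
  rw [W.neg_smul']
  exact W.one_smul' _

theorem zero_mem_combo {l : List (F × V)} (h : ∀ p ∈ l, p.1 = K.zero ∨ p.2 = W.zero) :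
    W.zero ∈ combo W.hadd W.smul W.zero l := by
  induction l with
  | nil => rfl
  | cons p t ih =>
    have hp : W.zero ∈ W.smul p.1 p.2 := by
      rcases h p List.mem_cons_self with h' | h'
      · rw [h']; exact W.zero_smul' _
      · rw [h', smul_zero]; rfl
    have ht := ih fun q hq => h q (List.mem_cons_of_mem _ hq)
    exact Set.mem_biUnion hp (Set.mem_biUnion ht (W.mem_hadd_zero _))

/-- The padding term `0 * γ` stands in for the neutrality of `θ`, which the axioms do not
provide: `θ # b` may be larger than `{b}`. -/
theorem mem_combo_append_of_mem_hadd {a b x : V} {l₁ l₂ : List (F × V)} (γ : V)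
    (ha : a ∈ combo W.hadd W.smul W.zero l₁) (hb : b ∈ combo W.hadd W.smul W.zero l₂)
    (hx : x ∈ W.hadd a b) :
    x ∈ combo W.hadd W.smul W.zero (l₁ ++ (K.zero, γ) :: l₂) := by
  induction l₁ generalizing a x with
  | nil =>
    obtain rfl : a = W.zero := ha
    exact Set.mem_biUnion (W.zero_smul' γ) (Set.mem_biUnion hb hx)
  | cons p t ih =>
    simp only [combo, hSum, Set.mem_iUnion] at ha
    obtain ⟨s, hs, u, hu, hasu⟩ := ha
    obtain ⟨y, hy, hxy⟩ := W.exists_mem_hadd_of_mem_hadd_of_mem_hadd hx hasu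
    exact Set.mem_biUnion hs (Set.mem_biUnion (ih hu hy) hxy)

theorem mem_combo_map_of_mem_smul {b x : V} {a : F} {l : List (F × V)}
    (hb : b ∈ combo W.hadd W.smul W.zero l) (hx : x ∈ W.smul a b) :
    x ∈ combo W.hadd W.smul W.zero (l.map fun p => (K.mul a p.1, p.2)) := by
  induction l generalizing b x with
  | nil =>
    obtain rfl : b = W.zero := hb
    rwa [smul_zero] at hx
  | cons p t ih =>
    simp only [combo, hSum, Set.mem_iUnion] at hb
    obtain ⟨s, hs, u, hu, hbsu⟩ := hb
    have hx' := W.smul_hadd a s u (Set.mem_biUnion hbsu hx)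
    simp only [hSum, Set.mem_iUnion] at hx'
    obtain ⟨x₁, hx₁, x₂, hx₂, hx⟩ := hx'
    have hx₁' : x₁ ∈ W.smul (K.mul a p.1) p.2 := by
      rw [W.mul_smul']
      exact Set.mem_biUnion hs hx₁
    exact Set.mem_biUnion hx₁' (Set.mem_biUnion (ih hu hx₂) hx)

section Span

variable {A B : Set V}

theorem nonempty_of_mem_hspan {x : V} (hx : x ∈ hspan W.hadd W.smul W.zero A) :
    A.Nonempty := by
  obtain ⟨l, hne, hA, -⟩ := hx
  obtain ⟨p, hp⟩ := List.exists_mem_of_ne_nil l hne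
  exact ⟨p.2, hA p hp⟩

theorem mem_hspan_of_mem {α : V} (hα : α ∈ A) : α ∈ hspan W.hadd W.smul W.zero A :=
  ⟨[(K.one, α)], by simp, by simpa using hα,
    Set.mem_biUnion (W.one_smul' α) (Set.mem_biUnion rfl (W.mem_hadd_zero α))⟩

theorem zero_mem_hspan (hA : A.Nonempty) : W.zero ∈ hspan W.hadd W.smul W.zero A := by
  obtain ⟨γ, hγ⟩ := hA
  exact ⟨[(K.zero, γ)], by simp, by simpa using hγ, W.zero_mem_combo (by simp)⟩

theorem hadd_mem_hspan {a b x : V} (ha : a ∈ hspan W.hadd W.smul W.zero A)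
    (hb : b ∈ hspan W.hadd W.smul W.zero A) (hx : x ∈ W.hadd a b) :
    x ∈ hspan W.hadd W.smul W.zero A := by
  obtain ⟨γ, hγ⟩ := W.nonempty_of_mem_hspan ha
  obtain ⟨l₁, -, hl₁, ha⟩ := ha
  obtain ⟨l₂, -, hl₂, hb⟩ := hb
  refine ⟨l₁ ++ (K.zero, γ) :: l₂, by simp, ?_, W.mem_combo_append_of_mem_hadd γ ha hb hx⟩
  simp only [List.mem_append, List.mem_cons]
  rintro p (hp | rfl | hp)
  exacts [hl₁ p hp, hγ, hl₂ p hp]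

theorem smul_mem_hspan {b x : V} {a : F} (hb : b ∈ hspan W.hadd W.smul W.zero A)
    (hx : x ∈ W.smul a b) : x ∈ hspan W.hadd W.smul W.zero A := by
  obtain ⟨l, hne, hl, hb⟩ := hb
  refine ⟨l.map fun p => (K.mul a p.1, p.2), by simpa using hne, ?_,
    W.mem_combo_map_of_mem_smul hb hx⟩
  simp only [List.mem_map]
  rintro _ ⟨q, hq, rfl⟩
  exact hl q hq

theorem neg_mem_hspan {b : V} (hb : b ∈ hspan W.hadd W.smul W.zero A) :
    W.neg b ∈ hspan W.hadd W.smul W.zero A :=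
  W.smul_mem_hspan hb (W.neg_mem_smul_neg_one b)

theorem combo_subset_hspan (hA : A.Nonempty) {l : List (F × V)}
    (hl : ∀ p ∈ l, p.2 ∈ hspan W.hadd W.smul W.zero A) :
    combo W.hadd W.smul W.zero l ⊆ hspan W.hadd W.smul W.zero A := by
  induction l with
  | nil =>
    rintro x rfl
    exact W.zero_mem_hspan hA
  | cons p t ih =>
    intro x hx
    simp only [combo, hSum, Set.mem_iUnion] at hx
    obtain ⟨s, hs, u, hu, hx⟩ := hx
    exact W.hadd_mem_hspan (W.smul_mem_hspan (hl p List.mem_cons_self) hs)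
      (ih (fun q hq => hl q (List.mem_cons_of_mem _ hq)) hu) hx

theorem hspan_subset_hspan (h : ∀ a ∈ A, a ∈ hspan W.hadd W.smul W.zero B) :
    hspan W.hadd W.smul W.zero A ⊆ hspan W.hadd W.smul W.zero B := by
  intro x hx
  obtain ⟨a, ha⟩ := W.nonempty_of_mem_hspan hx
  obtain ⟨l, -, hl, hx⟩ := hx
  exact W.combo_subset_hspan (W.nonempty_of_mem_hspan (h a ha)) (fun p hp => h _ (hl p hp)) hx

end Span

end General

section Real

variable {K : RealHyperfield} {V : Type*} (W : HypVecSp ℝ K.toHyperfield V)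

theorem neg_mem_smul_neg (hc : K.neg K.one = -1) {x α : V} {a : ℝ} (h : x ∈ W.smul a α) : W.neg x ∈ W.smul (-a) α := by
  have hm := W.mul_smul' (K.neg K.one) a α
  rw [K.mul_eq, hc, neg_one_mul] at hm
  rw [hm]
  exact Set.mem_biUnion h (hc ▸ W.neg_mem_smul_neg_one x)

theorem ne_zero_of_linearIndependent {n : ℕ} {w : Fin n → V}
    (hli : ∀ l : Fin n → ℝ,
      W.zero ∈ combo W.hadd W.smul W.zero (List.ofFn fun i => (l i, w i)) → ∀ i, l i = 0)
    (i : Fin n) : w i ≠ W.zero := by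
  intro hi
  have h := hli (Pi.single i 1) (W.zero_mem_combo ?_) i
  · simp at h
  simp only [List.mem_ofFn, forall_exists_index]
  rintro _ j rfl
  by_cases hj : j = i
  · exact .inr (hj ▸ hi)
  · exact .inl (by simp [hj, K.zero_eq])

end Real

end HypVecSp

namespace InnerHyp

variable {K : RealHyperfield} {V : Type*} (W : InnerHyp K V)

theorem inner_zero_left (γ : V) : W.inner W.zero γ = 0 := by
  have hle : W.inner W.zero γ ≤ K.zero * W.inner γ γ :=
    (W.sup_smul K.zero γ γ).1 ⟨W.zero, W.zero_smul' γ, rfl⟩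
  have hge : W.inner γ γ ≤ W.inner γ γ + W.inner W.zero γ :=
    (W.sup_hadd γ W.zero γ).1 ⟨γ, W.mem_hadd_zero γ, rfl⟩
  rw [K.zero_eq, zero_mul] at hle
  linarith

theorem inner_neg_left_eq_mul (β γ : V) :
    W.inner (W.neg β) γ = K.neg K.one * W.inner β γ := by
  have h := W.sup_smul (K.neg K.one) β γ
  rw [W.neg_smul'] at h
  rw [← (W.sup_smul K.one (W.neg β) γ).unique h, K.one_eq, one_mul]

/-- With `c = K.neg K.one`, the sup axiom applied to `θ ∈ β # (-β)` gives `0 ≤ (1 + c) ⟨β, γ⟩`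
for all `β, γ`; `⟨·, α⟩` is positive at `α` and negative on `(-1) * α`, so `c = -1`. -/
theorem neg_one_eq_of_ne_zero {α : V} (hα : α ≠ W.zero) : K.neg K.one = -1 := by
  have key : ∀ β γ : V, 0 ≤ (1 + K.neg K.one) * W.inner β γ := by
    intro β γ
    have h : W.inner W.zero γ ≤ W.inner β γ + W.inner (W.neg β) γ :=
      (W.sup_hadd β (W.neg β) γ).1 ⟨W.zero, (W.neg_spec β).1, rfl⟩
    rw [inner_zero_left, inner_neg_left_eq_mul] at h
    linarith
  have hpos : 0 < W.inner α α := W.inner_pos α hα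
  obtain ⟨x, hx⟩ := W.smul_nonempty (-1) α
  have hneg : W.inner x α ≤ -1 * W.inner α α := (W.sup_smul (-1) α α).1 ⟨x, hx, rfl⟩
  nlinarith [key α α, key x α]

theorem inner_neg_left (hc : K.neg K.one = -1) (β γ : V) :
    W.inner (W.neg β) γ = -W.inner β γ := by
  rw [inner_neg_left_eq_mul, hc, neg_one_mul]

/-- The sup axioms only bound `⟨x, γ⟩` from above; the lower bound comes from the same axiom
applied to `α ∈ x # (-β)`. -/
theorem inner_eq_add_of_mem_hadd (hc : K.neg K.one = -1) {x α β : V} (h : x ∈ W.hadd α β)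
    (γ : V) : W.inner x γ = W.inner α γ + W.inner β γ := by
  have hle : W.inner x γ ≤ W.inner α γ + W.inner β γ := (W.sup_hadd α β γ).1 ⟨x, h, rfl⟩
  have hge : W.inner α γ ≤ W.inner x γ + W.inner (W.neg β) γ :=
    (W.sup_hadd x (W.neg β) γ).1 ⟨α, W.mem_shift x α β h, rfl⟩
  rw [inner_neg_left W hc] at hge
  linarith

theorem inner_eq_mul_of_mem_smul (hc : K.neg K.one = -1) {x α : V} {a : ℝ}
    (h : x ∈ W.smul a α) (γ : V) : W.inner x γ = a * W.inner α γ := by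
  have hle : W.inner x γ ≤ a * W.inner α γ := (W.sup_smul a α γ).1 ⟨x, h, rfl⟩
  have hge : W.inner (W.neg x) γ ≤ -a * W.inner α γ :=
    (W.sup_smul (-a) α γ).1 ⟨W.neg x, W.neg_mem_smul_neg hc h, rfl⟩
  rw [inner_neg_left W hc] at hge
  linarith

theorem inner_eq_sum_of_mem_combo (hc : K.neg K.one = -1) {x : V} {l : List (ℝ × V)}
    (h : x ∈ combo W.hadd W.smul W.zero l) (γ : V) :
    W.inner x γ = (l.map fun p => p.1 * W.inner p.2 γ).sum := by
  induction l generalizing x with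
  | nil =>
    obtain rfl : x = W.zero := h
    simp [inner_zero_left]
  | cons p t ih =>
    simp only [combo, hSum, Set.mem_iUnion] at h
    obtain ⟨s, hs, u, hu, hx⟩ := h
    rw [W.inner_eq_add_of_mem_hadd hc hx, W.inner_eq_mul_of_mem_smul hc hs, ih hu,
      List.map_cons, List.sum_cons]

def gramSchmidtStep {m : ℕ} (w : V) (u : Fin m → V) : Set V :=
  hSum W.hadd {w}
    (W.neg '' combo W.hadd W.smul W.zero
      (List.ofFn fun j => (W.inner w (u j) / W.inner (u j) (u j), u j)))

/-- For `k = 0` the step reads `v₀ ∈ w₀ # θ`, which `v₀ = w₀` satisfies. -/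
def IsGramSchmidt {n : ℕ} (w v : Fin n → V) : Prop :=
  ∀ k : Fin n, v k ∈ W.gramSchmidtStep (w k) fun j : Fin k.1 => v ⟨j.1, j.2.trans k.2⟩

theorem self_mem_gramSchmidtStep_of_fin_zero (w : V) (u : Fin 0 → V) :
    w ∈ W.gramSchmidtStep w u :=
  Set.mem_biUnion rfl (Set.mem_biUnion ⟨W.zero, rfl, W.neg_zero⟩ (W.mem_hadd_zero w))

theorem exists_mem_combo_of_mem_gramSchmidtStep {m : ℕ} {w x : V} {u : Fin m → V}
    (hx : x ∈ W.gramSchmidtStep w u) :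
    ∃ t ∈ combo W.hadd W.smul W.zero
      (List.ofFn fun j => (W.inner w (u j) / W.inner (u j) (u j), u j)),
      x ∈ W.hadd w (W.neg t) := by
  simp only [gramSchmidtStep, hSum, Set.mem_iUnion, Set.mem_singleton_iff] at hx
  obtain ⟨_, rfl, _, ⟨t, ht, rfl⟩, hx⟩ := hx
  exact ⟨t, ht, hx⟩

theorem inner_eq_zero_of_mem_gramSchmidtStep (hc : K.neg K.one = -1) {m : ℕ} {w x : V}
    {u : Fin m → V} (hu : ∀ i, u i ≠ W.zero)
    (horth : ∀ i j, i ≠ j → W.inner (u i) (u j) = 0) (hx : x ∈ W.gramSchmidtStep w u)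
    (j : Fin m) : W.inner x (u j) = 0 := by
  obtain ⟨t, ht, hx⟩ := W.exists_mem_combo_of_mem_gramSchmidtStep hx
  have hj : W.inner (u j) (u j) ≠ 0 := (W.inner_pos _ (hu j)).ne'
  have hsum : W.inner t (u j) = W.inner w (u j) := by
    rw [W.inner_eq_sum_of_mem_combo hc ht, List.map_ofFn, List.sum_ofFn,
      Finset.sum_eq_single j (fun i _ hij => by simp [horth i j hij]) (by simp),
      Function.comp_apply, div_mul_cancel₀ _ hj]
  rw [W.inner_eq_add_of_mem_hadd hc hx, inner_neg_left W hc, hsum, add_neg_cancel]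

theorem mem_hspan_of_mem_gramSchmidtStep {m : ℕ} {A : Set V} {w x : V} {u : Fin m → V}
    (hw : w ∈ hspan W.hadd W.smul W.zero A) (hu : ∀ i, u i ∈ hspan W.hadd W.smul W.zero A)
    (hx : x ∈ W.gramSchmidtStep w u) : x ∈ hspan W.hadd W.smul W.zero A := by
  obtain ⟨t, ht, hx⟩ := W.exists_mem_combo_of_mem_gramSchmidtStep hx
  have htA := W.combo_subset_hspan (W.nonempty_of_mem_hspan hw) (by simpa using hu) ht
  exact W.hadd_mem_hspan hw (W.neg_mem_hspan htA) hx

theorem mem_hspan_of_gramSchmidtStep_mem {m : ℕ} {A : Set V} {w x : V} {u : Fin m → V}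
    (hx : x ∈ hspan W.hadd W.smul W.zero A) (hu : ∀ i, u i ∈ hspan W.hadd W.smul W.zero A)
    (hxw : x ∈ W.gramSchmidtStep w u) : w ∈ hspan W.hadd W.smul W.zero A := by
  obtain ⟨t, ht, hxw⟩ := W.exists_mem_combo_of_mem_gramSchmidtStep hxw
  have htA := W.combo_subset_hspan (W.nonempty_of_mem_hspan hx) (by simpa using hu) ht
  have hwx := W.mem_shift x w (W.neg t) hxw
  rw [W.neg_neg] at hwx
  exact W.hadd_mem_hspan hx htA hwx

namespace IsGramSchmidt

variable {W} {n : ℕ} {w v : Fin n → V}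

theorem inner_eq_zero_of_lt (h : W.IsGramSchmidt w v) (hc : K.neg K.one = -1)
    (hv : ∀ k, v k ≠ W.zero) {i k : Fin n} (hik : i < k) : W.inner (v k) (v i) = 0 := by
  induction k using WellFoundedLT.induction generalizing i with
  | _ k ih =>
    refine W.inner_eq_zero_of_mem_gramSchmidtStep hc (fun _ => hv _) ?_ (h k) ⟨i.1, hik⟩
    intro a b hab
    rcases lt_or_gt_of_ne (Fin.val_ne_of_ne hab) with hlt | hlt
    · rw [W.inner_symm]
      exact ih _ (Fin.mk_lt_mk.2 b.2) hlt
    · exact ih _ (Fin.mk_lt_mk.2 a.2) hlt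

theorem inner_eq_zero (h : W.IsGramSchmidt w v) (hc : K.neg K.one = -1)
    (hv : ∀ k, v k ≠ W.zero) {i j : Fin n} (hij : i ≠ j) : W.inner (v i) (v j) = 0 := by
  rcases lt_or_gt_of_ne hij with hlt | hlt
  · rw [W.inner_symm]
    exact h.inner_eq_zero_of_lt hc hv hlt
  · exact h.inner_eq_zero_of_lt hc hv hlt

theorem gramSchmidt_mem_hspan (h : W.IsGramSchmidt w v) (k : Fin n) :
    v k ∈ hspan W.hadd W.smul W.zero (Set.range w) := by
  induction k using WellFoundedLT.induction with
  | _ k ih =>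
    exact W.mem_hspan_of_mem_gramSchmidtStep (W.mem_hspan_of_mem ⟨k, rfl⟩)
      (fun j => ih _ (Fin.mk_lt_mk.2 j.2)) (h k)

theorem mem_hspan_gramSchmidt (h : W.IsGramSchmidt w v) (k : Fin n) :
    w k ∈ hspan W.hadd W.smul W.zero (Set.range v) :=
  W.mem_hspan_of_gramSchmidtStep_mem (W.mem_hspan_of_mem ⟨k, rfl⟩)
    (fun _ => W.mem_hspan_of_mem ⟨_, rfl⟩) (h k)

theorem hspan_range_eq (h : W.IsGramSchmidt w v) :
    hspan W.hadd W.smul W.zero (Set.range v) = hspan W.hadd W.smul W.zero (Set.range w) :=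
  (W.hspan_subset_hspan (Set.forall_mem_range.2 h.gramSchmidt_mem_hspan)).antisymm
    (W.hspan_subset_hspan (Set.forall_mem_range.2 h.mem_hspan_gramSchmidt))

end IsGramSchmidt

end InnerHyp

/-- Gram–Schmidt process: from a linearly independent family `w₁, …, wₙ`,
the vectors `v₁ = w₁`, `vₖ ∈ wₖ # (−∑_{j<k} (⟨wₖ,vⱼ⟩/‖vⱼ‖²) * vⱼ)` (chosen
non-zero) form an orthogonal family of non-zero vectors with the same span. -/
theorem gram_schmidt {K : RealHyperfield} {V : Type*} (W : InnerHyp K V)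
    {n : ℕ} (hn : 0 < n) (w v : Fin n → V)
    (hli : ∀ l : Fin n → ℝ,
      W.zero ∈ combo W.hadd W.smul W.zero (List.ofFn fun i => (l i, w i)) →
      ∀ i, l i = 0)
    (h0 : v ⟨0, hn⟩ = w ⟨0, hn⟩)
    (hstep : ∀ k : Fin n, 0 < k.1 →
      v k ≠ W.zero ∧
      v k ∈ hSum W.hadd {w k}
        (W.neg '' combo W.hadd W.smul W.zero
          (List.ofFn fun j : Fin k.1 =>
            (W.inner (w k) (v ⟨j.1, j.2.trans k.2⟩) /
               W.inner (v ⟨j.1, j.2.trans k.2⟩) (v ⟨j.1, j.2.trans k.2⟩),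
             v ⟨j.1, j.2.trans k.2⟩)))) :
    (∀ k, v k ≠ W.zero) ∧
    (∀ i j, i ≠ j → W.inner (v i) (v j) = 0) ∧
    hspan W.hadd W.smul W.zero (Set.range v)
      = hspan W.hadd W.smul W.zero (Set.range w) := by
  have eq_zero : ∀ k : Fin n, ¬0 < k.1 → k = ⟨0, hn⟩ := fun k hk =>
    Fin.ext (Nat.eq_zero_of_not_pos hk)
  have hv₀ : v ⟨0, hn⟩ ≠ W.zero := h0 ▸ W.ne_zero_of_linearIndependent hli _
  have hv : ∀ k, v k ≠ W.zero := by
    intro k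
    by_cases hk : 0 < k.1
    · exact (hstep k hk).1
    · rwa [eq_zero k hk]
  have hgs : W.IsGramSchmidt w v := by
    intro k
    by_cases hk : 0 < k.1
    · exact (hstep k hk).2
    · obtain rfl := eq_zero k hk
      rw [h0]
      exact W.self_mem_gramSchmidtStep_of_fin_zero _ _
  have hc : K.neg K.one = -1 := W.neg_one_eq_of_ne_zero hv₀
  exact ⟨hv, fun i j => hgs.inner_eq_zero hc hv, hgs.hspan_range_eq⟩
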